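/- Let β > 0 and φ = ρ_β, where ρ_β(z) = z·arcsinh(z/β) − √(z²+β²), so that φ″(z) = 1/√(z²+β²), κ₁(C) = β, κ₂(C) = √(C²+β²), and κ₃(C) = C/(C²+β²)^{3/2}. Then for any constants λ₀, D₁, D₂ > 0 there exists β₀ > 0 such that for all β ≥ β₀ there exists C₁ > 0 satisfying both (I) C₁·κ₁(C₁)/κ₂(C₁) ≥ D₁ and (II) κ₂(C₁)κ₃(C₁)( λ₀·κ₂(C₁)/κ₁(C₁) + D₂·(κ₂(C₁)/κ₁(C₁))² ) ≤ λ₀/(2D₁). -/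

import Mathlib

open Filter Topology

noncomputable section

/-- The hypentropy potential `ρ_β(z) = z·arcsinh(z/β) − √(z² + β²)`. -/
def hypentropy (β : ℝ) : ℝ → ℝ := fun z => z * Real.arsinh (z / β) - Real.sqrt (z ^ 2 + β ^ 2)

/-- **The scaled hypentropy potential satisfies the convergence and linearization
conditions for all sufficiently large `β`.**  For `φ = ρ_β` one has
`φ″(z) = 1/√(z²+β²)`, so `κ₁(C) = β`, `κ₂(C) = √(C²+β²)` and
`κ₃(C) = C/(C²+β²)^{3/2}`; with these values, for any `λ₀, D₁, D₂ > 0` there is a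
threshold `β₀ > 0` such that for every `β ≥ β₀` some `C₁ > 0` satisfies both
conditions (I) and (II). -/
theorem hypentropy_threshold
    (lam0 D1 D2 : ℝ) (hlam0 : 0 < lam0) (hD1 : 0 < D1) (hD2 : 0 < D2) :
    ∃ β₀ > (0:ℝ), ∀ β ≥ β₀, ∃ C₁ > (0:ℝ),
      -- (I): C₁ · κ₁(C₁)/κ₂(C₁) ≥ D₁ with κ₁(C₁) = β, κ₂(C₁) = √(C₁²+β²)
      D1 ≤ C₁ * β / Real.sqrt (C₁ ^ 2 + β ^ 2) ∧
      -- (II): κ₂κ₃(λ₀·κ₂/κ₁ + D₂·(κ₂/κ₁)²) ≤ λ₀/(2D₁) with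
      -- κ₃(C₁) = C₁/(C₁²+β²)^{3/2}
      Real.sqrt (C₁ ^ 2 + β ^ 2) * (C₁ / (C₁ ^ 2 + β ^ 2) ^ ((3:ℝ) / 2)) *
          (lam0 * (Real.sqrt (C₁ ^ 2 + β ^ 2) / β)
            + D2 * (Real.sqrt (C₁ ^ 2 + β ^ 2) / β) ^ 2)
        ≤ lam0 / (2 * D1) := by
  have h2 : (0:ℝ) < Real.sqrt 2 := by positivity
  have h2sq : Real.sqrt 2 ^ 2 = 2 := Real.sq_sqrt (by norm_num)
  refine ⟨Real.sqrt 2 * D1 + D1 * (Real.sqrt 2 * lam0 + 2 * D2) / lam0, by positivity, ?_⟩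
  intro β hβ
  have hterm2 : 0 < D1 * (Real.sqrt 2 * lam0 + 2 * D2) / lam0 := by positivity
  have hb : 0 < β := lt_of_lt_of_le (by positivity) hβ
  have hx : β ^ 2 + β ^ 2 = 2 * β ^ 2 := by ring
  have hxpos : (0:ℝ) < β ^ 2 + β ^ 2 := by positivity
  have hs : Real.sqrt (β ^ 2 + β ^ 2) = Real.sqrt 2 * β := by
    rw [hx, show (2:ℝ) * β ^ 2 = (Real.sqrt 2 * β) ^ 2 by rw [mul_pow, h2sq]]
    exact Real.sqrt_sq (by positivity)
  have hrp : (β ^ 2 + β ^ 2) ^ ((3:ℝ) / 2)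
      = (β ^ 2 + β ^ 2) * (Real.sqrt 2 * β) := by
    rw [show (3:ℝ)/2 = 1 + 1/2 by norm_num, Real.rpow_add hxpos, Real.rpow_one,
      ← Real.sqrt_eq_rpow, hs]
  refine ⟨β, hb, ?_, ?_⟩
  · rw [hs, le_div_iff₀ (by positivity)]
    have h1 : Real.sqrt 2 * D1 ≤ β := by nlinarith
    nlinarith [mul_le_mul_of_nonneg_right h1 hb.le, h2sq]
  · rw [hs, hrp, hx]
    have hβ2 : β ≥ D1 * (Real.sqrt 2 * lam0 + 2 * D2) / lam0 := by nlinarith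
    have key : D1 * (Real.sqrt 2 * lam0 + 2 * D2) ≤ lam0 * β := by
      rw [ge_iff_le, div_le_iff₀ hlam0] at hβ2; linarith
    have hsb : Real.sqrt 2 * β / β = Real.sqrt 2 := by field_simp
    rw [hsb]
    have heq : Real.sqrt 2 * β * (β / (2 * β ^ 2 * (Real.sqrt 2 * β)))
        * (lam0 * Real.sqrt 2 + D2 * Real.sqrt 2 ^ 2)
        = (lam0 * Real.sqrt 2 + 2 * D2) / (2 * β) := by
      rw [h2sq, eq_div_iff (by positivity)]
      field_simp
    rw [heq, div_le_div_iff₀ (by positivity) (by positivity)]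
    nlinarith [key]

end
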